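/- arXiv:2206.12350 — 7 statements merged into one kernel-verified Lean document; each statement's English description precedes it below -/
import Mathlib

section
/- Let n ≥ 1 and suppose M_k is invertible for every k ∈ ℤ. Define c_k^T := e_n^T M_k^{-1} and let Θ_k be the n×n matrix whose i-th row (i = 0, …, n−1) is c_{k+i}^T A_{k+i-1} ⋯ A_k. Then the product Θ_k M_k has (i,j) entry equal to 0 whenever i + j < n − 1 and equal to 1 whenever i + j = n − 1; consequently Θ_k M_k has determinant ±1 and Θ_k is invertible for every k. -/
open Matrix BigOperators

noncomputable section

/-- `Pmat n A k j = A (k-1) * A (k-2) * ⋯ * A (k-j)` (product of `j` factors, `Pmat n A k 0 = 1`). -/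
def Pmat (n : ℕ) (A : ℤ → Matrix (Fin n) (Fin n) ℝ) (k : ℤ) : ℕ → Matrix (Fin n) (Fin n) ℝ
  | 0 => 1
  | j + 1 => Pmat n A k j * A (k - ((j : ℤ) + 1))

/-- The matrix `M_k` whose `j`-th column is `P_k^{(j)} b_{k-1-j}`. -/
def Mmat (n : ℕ) (A : ℤ → Matrix (Fin n) (Fin n) ℝ) (b : ℤ → Fin n → ℝ) (k : ℤ) :
    Matrix (Fin n) (Fin n) ℝ :=
  Matrix.of fun i j => (Pmat n A k (j : ℕ) *ᵥ b (k - 1 - ((j : ℕ) : ℤ))) i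

/-- The last standard basis vector `e_n` of `ℝ^n`. -/
def elast (n : ℕ) : Fin n → ℝ := fun i => if (i : ℕ) = n - 1 then 1 else 0

/-- The row vector `c_k^T := e_n^T M_k^{-1}`. -/
def cvec (n : ℕ) (A : ℤ → Matrix (Fin n) (Fin n) ℝ) (b : ℤ → Fin n → ℝ) (k : ℤ) :
    Fin n → ℝ :=
  elast n ᵥ* (Mmat n A b k)⁻¹

/-- The matrix `Θ_k` whose `i`-th row is `c_{k+i}^T A_{k+i-1} ⋯ A_k`. -/
def Theta (n : ℕ) (A : ℤ → Matrix (Fin n) (Fin n) ℝ) (b : ℤ → Fin n → ℝ) (k : ℤ) :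
    Matrix (Fin n) (Fin n) ℝ :=
  Matrix.of fun i j => (cvec n A b (k + (i : ℕ)) ᵥ* Pmat n A (k + (i : ℕ)) (i : ℕ)) j

/-- The transformed dynamics matrix `Ā_k := Θ_{k+1} A_k Θ_k^{-1}`. -/
def Abar (n : ℕ) (A : ℤ → Matrix (Fin n) (Fin n) ℝ) (b : ℤ → Fin n → ℝ) (k : ℤ) :
    Matrix (Fin n) (Fin n) ℝ :=
  Theta n A b (k + 1) * A k * (Theta n A b k)⁻¹

lemma Pmat_add (n : ℕ) (A : ℤ → Matrix (Fin n) (Fin n) ℝ) (k : ℤ) (j m : ℕ) :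
    Pmat n A (k + j) j * Pmat n A k m = Pmat n A (k + j) (j + m) := by
  induction m with
  | zero => simp [Pmat]
  | succ m ih =>
      have h1 : (j + (m + 1)) = (j + m) + 1 := by omega
      rw [h1]
      show Pmat n A (k + j) j * (Pmat n A k m * A (k - ((m : ℤ) + 1)))
          = Pmat n A (k + j) (j + m) * A ((k + j) - (((j + m : ℕ) : ℤ) + 1))
      rw [← mul_assoc, ih]
      congr 2
      push_cast
      ring

lemma cvec_vecMul (n : ℕ) (A : ℤ → Matrix (Fin n) (Fin n) ℝ) (b : ℤ → Fin n → ℝ)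
    (hM : ∀ k : ℤ, IsUnit (Mmat n A b k)) (k : ℤ) :
    cvec n A b k ᵥ* Mmat n A b k = elast n := by
  rw [cvec, vecMul_vecMul, Matrix.nonsing_inv_mul _ ((Matrix.isUnit_iff_isUnit_det _).mp (hM k)),
    vecMul_one]

lemma entry_eq (n : ℕ) (A : ℤ → Matrix (Fin n) (Fin n) ℝ) (b : ℤ → Fin n → ℝ)
    (hM : ∀ k : ℤ, IsUnit (Mmat n A b k)) (k : ℤ) (i j : Fin n)
    (h : (i : ℕ) + (j : ℕ) < n) :
    (Theta n A b k * Mmat n A b k) i j = if (i : ℕ) + (j : ℕ) = n - 1 then 1 else 0 := by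
  have key : (Theta n A b k * Mmat n A b k) i j
      = (cvec n A b (k + (i : ℕ)) ᵥ* Mmat n A b (k + (i : ℕ))) ⟨(i : ℕ) + (j : ℕ), h⟩ := by
    have hrhs : (cvec n A b (k + (i : ℕ)) ᵥ* Mmat n A b (k + (i : ℕ))) ⟨(i : ℕ) + (j : ℕ), h⟩
        = cvec n A b (k + (i : ℕ)) ⬝ᵥ
            (Pmat n A (k + (i : ℕ)) ((i : ℕ) + (j : ℕ)) *ᵥ
              b ((k + (i : ℕ)) - 1 - (((i : ℕ) + (j : ℕ) : ℕ) : ℤ))) := by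
      simp [vecMul, Mmat, dotProduct]
    rw [hrhs, Matrix.dotProduct_mulVec, ← Pmat_add, ← Matrix.vecMul_vecMul,
      ← Matrix.dotProduct_mulVec]
    rw [Matrix.mul_apply]
    have hb : ((k + (i : ℕ)) - 1 - (((i : ℕ) + (j : ℕ) : ℕ) : ℤ)) = k - 1 - ((j : ℕ) : ℤ) := by
      push_cast; ring
    rw [hb]
    simp [Theta, Mmat, dotProduct, mulVec, dotProduct, Finset.mul_sum, Finset.sum_mul]
  rw [key, cvec_vecMul n A b hM]
  rfl


/-- `Θ_k M_k` has zero entries whenever `i + j < n - 1` and unit entries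
whenever `i + j = n - 1`; consequently `Θ_k M_k` has determinant `±1` and `Θ_k` is
invertible for every `k`. -/
theorem stmt1 (n : ℕ) (hn : 1 ≤ n)
    (A : ℤ → Matrix (Fin n) (Fin n) ℝ) (b : ℤ → Fin n → ℝ)
    (hM : ∀ k : ℤ, IsUnit (Mmat n A b k)) :
    (∀ k : ℤ, ∀ i j : Fin n, (i : ℕ) + (j : ℕ) < n - 1 →
        (Theta n A b k * Mmat n A b k) i j = 0) ∧
    (∀ k : ℤ, ∀ i j : Fin n, (i : ℕ) + (j : ℕ) = n - 1 →
        (Theta n A b k * Mmat n A b k) i j = 1) ∧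
    (∀ k : ℤ, (Theta n A b k * Mmat n A b k).det = 1 ∨
        (Theta n A b k * Mmat n A b k).det = -1) ∧
    (∀ k : ℤ, IsUnit (Theta n A b k)) := by
  have h0 : ∀ k : ℤ, ∀ i j : Fin n, (i : ℕ) + (j : ℕ) < n - 1 →
      (Theta n A b k * Mmat n A b k) i j = 0 := by
    intro k i j hij
    rw [entry_eq n A b hM k i j (by omega)]
    simp [Nat.ne_of_lt hij]
  have h1 : ∀ k : ℤ, ∀ i j : Fin n, (i : ℕ) + (j : ℕ) = n - 1 →
      (Theta n A b k * Mmat n A b k) i j = 1 := by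
    intro k i j hij
    rw [entry_eq n A b hM k i j (by omega)]
    simp [hij]
  have hdet : ∀ k : ℤ, (Theta n A b k * Mmat n A b k).det = 1 ∨
      (Theta n A b k * Mmat n A b k).det = -1 := by
    intro k
    set N := (Theta n A b k * Mmat n A b k).submatrix id ⇑(Fin.revPerm : Equiv.Perm (Fin n))
      with hN
    have hNdet : N.det = 1 := by
      rw [Matrix.det_of_lowerTriangular]
      · apply Finset.prod_eq_one
        intro i _
        have : (i : ℕ) + ((Fin.revPerm i : Fin n) : ℕ) = n - 1 := by
          simp [Fin.revPerm_apply, Fin.val_rev]; omega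
        exact h1 k i _ this
      · intro i j hij
        have hj := j.isLt
        have hlt : (i : ℕ) < (j : ℕ) := hij
        refine h0 k i (Fin.revPerm j) ?_
        rw [Fin.revPerm_apply, Fin.val_rev]
        omega
    rw [hN, Matrix.det_permute'] at hNdet
    rcases Int.units_eq_one_or (Equiv.Perm.sign (Fin.revPerm : Equiv.Perm (Fin n))) with h | h
    · left
      rw [h, Units.val_one, Int.cast_one, one_mul] at hNdet
      exact hNdet
    · right
      rw [h, Units.val_neg, Units.val_one, Int.cast_neg, Int.cast_one, neg_one_mul] at hNdet
      linarith
  refine ⟨h0, h1, hdet, fun k => ?_⟩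
  have hd := hdet k
  have : IsUnit (Theta n A b k * Mmat n A b k).det := by
    rcases hd with h | h <;> rw [h] <;> simp
  rw [Matrix.det_mul] at this
  rw [Matrix.isUnit_iff_isUnit_det]
  exact isUnit_of_mul_isUnit_left this
end
end

section
/- Let n ≥ 1 and suppose M_k is invertible for every k ∈ ℤ. With c_k^T := e_n^T M_k^{-1} and Θ_k the matrix whose i-th row is c_{k+i}^T A_{k+i-1} ⋯ A_k, one has Θ_{k+1} b_k = e_n (the last standard basis vector) for every k, i.e., the transformed input vector of the controller canonical form is b̄_k = (0, …, 0, 1)^T. -/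
open Matrix BigOperators

noncomputable section

/-- `Θ_{k+1} b_k = e_n` for every `k`, i.e. the transformed input vector of
the controller canonical form is `b̄_k = (0, …, 0, 1)^T`. -/
theorem stmt2 (n : ℕ) (hn : 1 ≤ n)
    (A : ℤ → Matrix (Fin n) (Fin n) ℝ) (b : ℤ → Fin n → ℝ)
    (hM : ∀ k : ℤ, IsUnit (Mmat n A b k)) :
    ∀ k : ℤ, Theta n A b (k + 1) *ᵥ b k = elast n := by
  intro k
  funext i
  set m : ℤ := k + 1 + (i : ℕ) with hm
  have hcol : (Pmat n A m (i : ℕ) *ᵥ b k) = fun r => Mmat n A b m r i := by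
    funext r
    have : m - 1 - ((i : ℕ) : ℤ) = k := by omega
    simp [Mmat, this]
  have hMm : (Mmat n A b m)⁻¹ * Mmat n A b m = 1 :=
    Matrix.nonsing_inv_mul _ ((Matrix.isUnit_iff_isUnit_det _).mp (hM m))
  have hcv : cvec n A b m ᵥ* Mmat n A b m = elast n := by
    rw [cvec, Matrix.vecMul_vecMul, hMm, Matrix.vecMul_one]
  calc (Theta n A b (k + 1) *ᵥ b k) i
      = ∑ j, (cvec n A b m ᵥ* Pmat n A m (i : ℕ)) j * b k j := by
        simp [Matrix.mulVec, dotProduct, Theta, hm]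
    _ = cvec n A b m ⬝ᵥ (Pmat n A m (i : ℕ) *ᵥ b k) := by
        rw [Matrix.dotProduct_mulVec]; rfl
    _ = (cvec n A b m ᵥ* Mmat n A b m) i := by
        rw [hcol]; rfl
    _ = elast n i := by rw [hcv]
end
end

section
/- Let n ≥ 1 and suppose M_k is invertible for every k ∈ ℤ. With c_k^T := e_n^T M_k^{-1} and Θ_k the matrix whose i-th row is c_{k+i}^T A_{k+i-1} ⋯ A_k, the transformed dynamics matrix Ā_k := Θ_{k+1} A_k Θ_k^{-1} is in companion (controller canonical) form in its first n−1 rows: for every i = 0, …, n−2, the i-th row of Ā_k equals the (i+1)-th standard basis row vector e_{i+1}^T. -/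
open Matrix BigOperators

noncomputable section

/-!
Row `i` of `Θ_{k+1} A_k` is `c_{k+1+i}^T A_{k+i} ⋯ A_{k+1} A_k`, which is row `i + 1` of `Θ_k`;
hence row `i` of `Θ_{k+1} A_k Θ_k⁻¹` is row `i + 1` of the identity, once `Θ_k` is known to be
invertible. Invertibility holds because `(Θ_k M_k)_{ij} = e_n^T M_{k+i}⁻¹ P_{k+i}^{(i+j)} b_{k-1-j}`
is entry `(n-1, i+j)` of `M_{k+i}⁻¹ M_{k+i}` whenever `i + j < n`, so `Θ_k M_k` is
anti-triangular with ones on the anti-diagonal.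
-/

theorem Matrix.isUnit_of_antitriangular {R : Type*} [CommRing R] {n : ℕ}
    (N : Matrix (Fin n) (Fin n) R)
    (hN : ∀ i j : Fin n, (i : ℕ) + j ≤ n - 1 → N i j = if (i : ℕ) + j = n - 1 then 1 else 0) :
    IsUnit N := by
  have hrev : ∀ i : Fin n, ((Fin.revPerm i : Fin n) : ℕ) = n - 1 - i := fun i => by
    simp only [Fin.revPerm_apply, Fin.val_rev]
    omega
  have hupper : (N.submatrix Fin.revPerm id).IsUpperTriangular := fun i j (hji : j < i) => by
    have hi := i.isLt
    rw [submatrix_apply, id_eq, hN _ _ (by rw [hrev]; omega), if_neg (by rw [hrev]; omega)]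
  have hdiag : ∀ i : Fin n, N.submatrix Fin.revPerm id i i = 1 := fun i => by
    have hi := i.isLt
    rw [submatrix_apply, id_eq, hN _ _ (by rw [hrev]; omega), if_pos (by rw [hrev]; omega)]
  have hdet : (Equiv.Perm.sign (Fin.revPerm (n := n)) : R) * N.det = 1 := by
    rw [← det_permute, det_of_isUpperTriangular hupper, Finset.prod_eq_one fun i _ => hdiag i]
  exact (isUnit_iff_isUnit_det N).mpr (IsUnit.of_mul_eq_one_right _ hdet)

section

variable {n : ℕ} (A : ℤ → Matrix (Fin n) (Fin n) ℝ) (b : ℤ → Fin n → ℝ)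

theorem Pmat_succ (k : ℤ) (j : ℕ) : Pmat n A k (j + 1) = Pmat n A k j * A (k - ((j : ℤ) + 1)) :=
  rfl

theorem Pmat_mul_Pmat (k : ℤ) (i j : ℕ) :
    Pmat n A (k + i) i * Pmat n A k j = Pmat n A (k + i) (i + j) := by
  induction j with
  | zero => rw [Pmat, mul_one, add_zero]
  | succ j ih =>
    rw [Pmat_succ, ← mul_assoc, ih, ← add_assoc, Pmat_succ]
    congr 2
    push_cast
    ring

theorem Theta_mul_Mmat_apply (hM : ∀ k : ℤ, IsUnit (Mmat n A b k)) (k : ℤ) (i j : Fin n)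
    (hij : (i : ℕ) + j < n) :
    (Theta n A b k * Mmat n A b k) i j = if (i : ℕ) + j = n - 1 then 1 else 0 := by
  let m : Fin n := ⟨i + j, hij⟩
  have hcol : Pmat n A (k + (i : ℕ)) m *ᵥ b (k - 1 - ((j : ℕ) : ℤ))
      = fun l => Mmat n A b (k + (i : ℕ)) l m := by
    funext l
    simp only [Mmat, of_apply, m]
    congr 2
    push_cast
    ring
  have hinv : (Mmat n A b (k + (i : ℕ)))⁻¹ * Mmat n A b (k + (i : ℕ)) = 1 :=
    nonsing_inv_mul _ ((isUnit_iff_isUnit_det _).mp (hM _))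
  calc (Theta n A b k * Mmat n A b k) i j
      = cvec n A b (k + (i : ℕ)) ⬝ᵥ (Pmat n A (k + (i : ℕ)) m *ᵥ b (k - 1 - ((j : ℕ) : ℤ))) := by
        rw [mul_apply', ← Pmat_mul_Pmat, ← mulVec_mulVec, dotProduct_mulVec]
        rfl
    _ = (elast n ᵥ* ((Mmat n A b (k + (i : ℕ)))⁻¹ * Mmat n A b (k + (i : ℕ)))) m := by
        rw [hcol, ← vecMul_vecMul]
        rfl
    _ = if (i : ℕ) + j = n - 1 then 1 else 0 := by
        rw [hinv, vecMul_one]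
        rfl

theorem isUnit_Theta (hM : ∀ k : ℤ, IsUnit (Mmat n A b k)) (k : ℤ) : IsUnit (Theta n A b k) := by
  have hprod : IsUnit (Theta n A b k * Mmat n A b k) :=
    isUnit_of_antitriangular _ fun i j hij => Theta_mul_Mmat_apply A b hM k i j (by omega)
  rw [isUnit_iff_isUnit_det, det_mul] at hprod
  exact (isUnit_iff_isUnit_det _).mpr (isUnit_of_mul_isUnit_left hprod)

theorem Theta_succ_mul_row (k : ℤ) (i : Fin n) (hi : (i : ℕ) + 1 < n) :
    (Theta n A b (k + 1) * A k) i = Theta n A b k ⟨i + 1, hi⟩ := by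
  have hshift : k + 1 + ((i : ℕ) : ℤ) = k + (((i + 1 : ℕ)) : ℤ) := by
    push_cast
    ring
  have hP : Pmat n A (k + 1 + (i : ℕ)) i * A k = Pmat n A (k + (((i + 1 : ℕ)) : ℤ)) (i + 1) := by
    rw [Pmat_succ, hshift]
    congr 2
    push_cast
    ring
  funext l
  change (cvec n A b (k + 1 + (i : ℕ)) ᵥ* Pmat n A (k + 1 + (i : ℕ)) i ᵥ* A k) l = _
  rw [vecMul_vecMul, hP, hshift]
  rfl

end

theorem stmt3_general (n : ℕ)
    (A : ℤ → Matrix (Fin n) (Fin n) ℝ) (b : ℤ → Fin n → ℝ)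
    (hM : ∀ k : ℤ, IsUnit (Mmat n A b k)) :
    ∀ k : ℤ, ∀ i j : Fin n, (i : ℕ) + 2 ≤ n →
      Abar n A b k i j = if (j : ℕ) = (i : ℕ) + 1 then 1 else 0 := by
  intro k i j hij
  have hT : IsUnit (Theta n A b k).det := (isUnit_iff_isUnit_det _).mp (isUnit_Theta A b hM k)
  rw [Abar, mul_apply', Theta_succ_mul_row A b k i (by omega), ← mul_apply',
    mul_nonsing_inv _ hT, one_apply]
  simp only [Fin.ext_iff, eq_comm]

/-- the transformed dynamics matrix `Ā_k := Θ_{k+1} A_k Θ_k⁻¹` is in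
companion (controller canonical) form in its first `n-1` rows: for every `i = 0, …, n-2`,
the `i`-th row of `Ā_k` equals the `(i+1)`-th standard basis row vector. -/
theorem stmt3 (n : ℕ) (hn : 1 ≤ n)
    (A : ℤ → Matrix (Fin n) (Fin n) ℝ) (b : ℤ → Fin n → ℝ)
    (hM : ∀ k : ℤ, IsUnit (Mmat n A b k)) :
    ∀ k : ℤ, ∀ i j : Fin n, (i : ℕ) + 2 ≤ n →
      Abar n A b k i j = if (j : ℕ) = (i : ℕ) + 1 then 1 else 0 :=
  stmt3_general n A b hM
end
end

section
/- Let n ≥ 1 and suppose M_k is invertible for every k ∈ ℤ. Set c_k^T := e_n^T M_k^{-1} and y_k := c_k^T x_k. Then for every solution (x, u) of the system and every k ∈ ℤ, the n-th forward shift of the output satisfies y_{k+n} = c_{k+n}^T A_{k+n-1} ⋯ A_k x_k + u_k; in particular the input u_k appears with coefficient exactly 1. -/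
open Matrix BigOperators

noncomputable section

lemma mulVec_sum' {n : ℕ} (M : Matrix (Fin n) (Fin n) ℝ) {ι : Type*} (s : Finset ι)
    (f : ι → Fin n → ℝ) : M *ᵥ (∑ j ∈ s, f j) = ∑ j ∈ s, M *ᵥ f j := by
  ext i
  simp [Matrix.mulVec, dotProduct, Finset.mul_sum, Finset.sum_apply]
  rw [Finset.sum_comm]

lemma Pmat_succ_left (n : ℕ) (A : ℤ → Matrix (Fin n) (Fin n) ℝ) (k : ℤ) (j : ℕ) :
    Pmat n A k (j+1) = A (k-1) * Pmat n A (k-1) j := by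
  induction j with
  | zero => simp [Pmat]
  | succ j ih =>
    have h1 : Pmat n A k (j+2) = Pmat n A k (j+1) * A (k - ((j:ℤ)+2)) := by
      show Pmat n A k ((j+1)+1) = _
      rw [Pmat]; push_cast; ring_nf
    have h2 : Pmat n A (k-1) (j+1) = Pmat n A (k-1) j * A (k - 1 - ((j:ℤ)+1)) := by
      rw [Pmat]
    rw [h1, ih, h2, Matrix.mul_assoc]
    congr 2
    ring

lemma sol_formula (n : ℕ)
    (A : ℤ → Matrix (Fin n) (Fin n) ℝ) (b : ℤ → Fin n → ℝ)
    (x : ℤ → Fin n → ℝ) (u : ℤ → ℝ)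
    (hsol : ∀ k : ℤ, x (k + 1) = A k *ᵥ x k + u k • b k) (k : ℤ) :
    ∀ m : ℕ, x (k + m) = Pmat n A (k+m) m *ᵥ x k +
      ∑ j ∈ Finset.range m, u (k + m - 1 - j) • (Pmat n A (k+m) j *ᵥ b (k + m - 1 - j)) := by
  intro m
  induction m with
  | zero => simp [Pmat]
  | succ m ih =>
    have hx : x (k + (m+1 : ℕ)) = A (k+m) *ᵥ x (k+m) + u (k+m) • b (k+m) := by
      have := hsol (k+m)
      push_cast
      rw [← add_assoc]
      exact this
    rw [hx, ih]
    rw [Matrix.mulVec_add, Matrix.mulVec_mulVec]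
    have hP : A (k+m) * Pmat n A (k+m) m = Pmat n A (k+(m+1:ℕ)) (m+1) := by
      rw [Pmat_succ_left]
      push_cast
      ring_nf
    rw [hP, mulVec_sum']
    rw [Finset.sum_range_succ']
    have hterm : ∀ j ∈ Finset.range m,
        A (k+m) *ᵥ (u (k + m - 1 - j) • (Pmat n A (k+m) j *ᵥ b (k + m - 1 - j))) =
        u (k + ((m+1:ℕ):ℤ) - 1 - ((j+1:ℕ):ℤ)) •
          (Pmat n A (k+((m+1:ℕ):ℤ)) (j+1) *ᵥ b (k + ((m+1:ℕ):ℤ) - 1 - ((j+1:ℕ):ℤ))) := by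
      intro j _
      rw [Matrix.mulVec_smul, Matrix.mulVec_mulVec]
      have h3 : A (k+m) * Pmat n A (k+m) j = Pmat n A (k+((m+1:ℕ):ℤ)) (j+1) := by
        rw [Pmat_succ_left]; push_cast; ring_nf
      rw [h3]
      congr 2 <;> push_cast <;> ring
    rw [Finset.sum_congr rfl hterm]
    have h0 : k + ((m+1:ℕ):ℤ) - 1 - ((0:ℕ):ℤ) = k + m := by push_cast; ring
    simp only [h0, Pmat, Matrix.one_mulVec]
    rw [add_assoc]

lemma dotProduct_sum' {n : ℕ} (v : Fin n → ℝ) {ι : Type*} (s : Finset ι)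
    (f : ι → Fin n → ℝ) : v ⬝ᵥ (∑ j ∈ s, f j) = ∑ j ∈ s, v ⬝ᵥ f j := by
  simp [dotProduct, Finset.sum_apply, Finset.mul_sum]
  rw [Finset.sum_comm]

/-- for every solution `(x, u)` the `n`-th forward shift of the output
`y_k := c_k^T x_k` satisfies `y_{k+n} = c_{k+n}^T A_{k+n-1} ⋯ A_k x_k + u_k`; in
particular the input `u_k` appears with coefficient exactly `1`. -/
theorem stmt5 (n : ℕ) (hn : 1 ≤ n)
    (A : ℤ → Matrix (Fin n) (Fin n) ℝ) (b : ℤ → Fin n → ℝ)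
    (hM : ∀ k : ℤ, IsUnit (Mmat n A b k))
    (x : ℤ → Fin n → ℝ) (u : ℤ → ℝ)
    (hsol : ∀ k : ℤ, x (k + 1) = A k *ᵥ x k + u k • b k) :
    ∀ k : ℤ,
      cvec n A b (k + n) ⬝ᵥ x (k + n) =
        (cvec n A b (k + n) ᵥ* Pmat n A (k + n) n) ⬝ᵥ x k + u k := by
  intro k
  set K : ℤ := k + n with hK
  set c : Fin n → ℝ := cvec n A b K with hc
  have hMc : c ᵥ* Mmat n A b K = elast n := by
    rw [hc, cvec, Matrix.vecMul_vecMul,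
      Matrix.nonsing_inv_mul _ ((Matrix.isUnit_iff_isUnit_det _).mp (hM K)),
      Matrix.vecMul_one]
  rw [sol_formula n A b x u hsol k n]
  rw [dotProduct_add, Matrix.dotProduct_mulVec, dotProduct_sum']
  congr 1
  have hterm : ∀ j ∈ Finset.range n,
      c ⬝ᵥ (u (k + n - 1 - j) • (Pmat n A K j *ᵥ b (k + n - 1 - j))) =
      if j = n - 1 then u k else 0 := by
    intro j hj
    have hjn : j < n := Finset.mem_range.mp hj
    have hcol : c ⬝ᵥ (Pmat n A K j *ᵥ b (k + n - 1 - j)) =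
        (c ᵥ* Mmat n A b K) ⟨j, hjn⟩ := by
      simp [Matrix.vecMul, dotProduct, Mmat, K]
    rw [dotProduct_smul, hcol, hMc, elast]
    simp only
    by_cases h : j = n - 1
    · simp only [h, if_pos rfl, smul_eq_mul, mul_one]
      congr 1
      push_cast [Nat.cast_sub hn]
      ring
    · simp [h]
  rw [Finset.sum_congr rfl hterm, Finset.sum_ite_eq' (Finset.range n) (n-1) (fun _ => u k)]
  simp [Nat.sub_lt (lt_of_lt_of_le Nat.zero_lt_one hn) Nat.zero_lt_one]
end
end

section
/- Let n ≥ 1 and suppose M_k is invertible for every k ∈ ℤ. Set c_k^T := e_n^T M_k^{-1}. If (x, u) and (x', u') are two solutions of the system whose output sequences coincide, i.e., c_k^T x_k = c_k^T x'_k for all k ∈ ℤ, then x_k = x'_k and u_k = u'_k for all k ∈ ℤ. -/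
open Matrix BigOperators

noncomputable section

/- In the coordinates `z_k := M_k⁻¹ (x_k - x'_k)` the difference of two solutions is a
shift register: since `A_k` maps the `j`-th column of `M_k` to the `(j+1)`-st column of `M_{k+1}`
and `b_k` is the first column of `M_{k+1}`, we get `z_{k+1} = (u_k - u'_k, z_k 0, …, z_k (n-2))`
as long as the last coordinate of `z_k` vanishes. That last coordinate is exactly the output
difference `c_kᵀ (x_k - x'_k) = 0`, so every coordinate of `z_k`, once shifted to the end,
vanishes; hence `z = 0`, and `u_k - u'_k = z_{k+1} 0 = 0`. -/

section ShiftRegister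

variable {α : Type*} [Zero α] {m : ℕ}

theorem shiftRegister_eq_zero (z : ℤ → Fin (m + 1) → α)
    (hshift : ∀ k (j : Fin m), z (k + 1) j.succ = z k j.castSucc)
    (hlast : ∀ k, z k (Fin.last m) = 0) (k : ℤ) (j : Fin (m + 1)) : z k j = 0 := by
  obtain ⟨i, hi⟩ : ∃ i, (j : ℕ) + i = m := ⟨m - j, by omega⟩
  induction i generalizing k j with
  | zero =>
    obtain rfl : j = Fin.last m := Fin.ext (by simpa using hi)
    exact hlast k
  | succ i ih =>
    obtain ⟨j', rfl⟩ : ∃ j' : Fin m, j = j'.castSucc := ⟨⟨j, by omega⟩, rfl⟩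
    rw [← hshift]
    exact ih _ _ (by simp at hi ⊢; omega)

end ShiftRegister

section Controllability

variable {n : ℕ} (A : ℤ → Matrix (Fin n) (Fin n) ℝ) (b : ℤ → Fin n → ℝ)

theorem Pmat_succ_succ (k : ℤ) (j : ℕ) : Pmat n A (k + 1) (j + 1) = A k * Pmat n A k j := by
  induction j with
  | zero => simp [Pmat]
  | succ j ih =>
    rw [Pmat, ih, Pmat, mul_assoc]
    congr 3
    push_cast
    ring

theorem Mmat_mulVec (k : ℤ) (z : Fin n → ℝ) :
    Mmat n A b k *ᵥ z = ∑ j, z j • (Pmat n A k j *ᵥ b (k - 1 - ((j : ℕ) : ℤ))) := by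
  ext i
  simp [Mmat, mulVec, dotProduct, Finset.sum_apply, mul_comm]

end Controllability

theorem elast_dotProduct {m : ℕ} (w : Fin (m + 1) → ℝ) : elast (m + 1) ⬝ᵥ w = w (Fin.last m) := by
  have hlast_iff (i : Fin (m + 1)) : (i : ℕ) = m ↔ i = Fin.last m := by
    simp [Fin.ext_iff]
  simp [elast, dotProduct, hlast_iff]

section ShiftCoordinates

variable {m : ℕ} (A : ℤ → Matrix (Fin (m + 1)) (Fin (m + 1)) ℝ) (b : ℤ → Fin (m + 1) → ℝ)

theorem mulVec_Mmat_add_smul (k : ℤ) (z : Fin (m + 1) → ℝ) (hz : z (Fin.last m) = 0) (v : ℝ) :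
    A k *ᵥ (Mmat (m + 1) A b k *ᵥ z) + v • b k
      = Mmat (m + 1) A b (k + 1) *ᵥ Fin.cons v (fun j => z j.castSucc) := by
  rw [Mmat_mulVec, Mmat_mulVec, Fin.sum_univ_castSucc, hz, zero_smul, add_zero,
    Fin.sum_univ_succ, mulVec_sum]
  simp only [Fin.cons_zero, Fin.cons_succ]
  refine (add_comm _ _).trans (congrArg₂ _ ?_ ?_)
  · simp [Pmat]
  · refine Finset.sum_congr rfl fun j _ => ?_
    rw [mulVec_smul, mulVec_mulVec, ← Pmat_succ_succ]
    congr 3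
    simp only [Fin.val_succ, Fin.val_castSucc]
    push_cast
    ring

theorem eq_zero_of_cvec_dotProduct_eq_zero (hM : ∀ k, IsUnit (Mmat (m + 1) A b k))
    (d : ℤ → Fin (m + 1) → ℝ) (v : ℤ → ℝ) (hd : ∀ k, d (k + 1) = A k *ᵥ d k + v k • b k)
    (hy : ∀ k, cvec (m + 1) A b k ⬝ᵥ d k = 0) : (∀ k, d k = 0) ∧ ∀ k, v k = 0 := by
  set z : ℤ → Fin (m + 1) → ℝ := fun k => (Mmat (m + 1) A b k)⁻¹ *ᵥ d k
  have hdz (k : ℤ) : Mmat (m + 1) A b k *ᵥ z k = d k := by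
    rw [mulVec_mulVec, mul_nonsing_inv _ ((isUnit_iff_isUnit_det _).mp (hM k)), one_mulVec]
  have hlast (k : ℤ) : z k (Fin.last m) = 0 := by
    rw [← elast_dotProduct (z k), dotProduct_mulVec]
    exact hy k
  have hstep (k : ℤ) : z (k + 1) = Fin.cons (v k) (fun j => z k j.castSucc) :=
    mulVec_injective_iff_isUnit.mpr (hM (k + 1)) <| by
      rw [hdz, hd, ← hdz k, mulVec_Mmat_add_smul A b k _ (hlast k)]
  have hz (k : ℤ) : z k = 0 :=
    funext <| shiftRegister_eq_zero z (fun k j => by rw [hstep, Fin.cons_succ]) hlast k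
  refine ⟨fun k => ?_, fun k => ?_⟩
  · rw [← hdz, hz, mulVec_zero]
  · simpa [hz] using (congrFun (hstep k) 0).symm

end ShiftCoordinates

/-- if two solutions `(x, u)` and `(x', u')` have the same output sequence
`c_k^T x_k = c_k^T x'_k` for all `k`, then they coincide: `x_k = x'_k` and `u_k = u'_k`
for all `k`. -/
theorem stmt8 (n : ℕ) (hn : 1 ≤ n)
    (A : ℤ → Matrix (Fin n) (Fin n) ℝ) (b : ℤ → Fin n → ℝ)
    (hM : ∀ k : ℤ, IsUnit (Mmat n A b k))
    (x x' : ℤ → Fin n → ℝ) (u u' : ℤ → ℝ)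
    (hsol : ∀ k : ℤ, x (k + 1) = A k *ᵥ x k + u k • b k)
    (hsol' : ∀ k : ℤ, x' (k + 1) = A k *ᵥ x' k + u' k • b k)
    (hy : ∀ k : ℤ, cvec n A b k ⬝ᵥ x k = cvec n A b k ⬝ᵥ x' k) :
    (∀ k : ℤ, x k = x' k) ∧ (∀ k : ℤ, u k = u' k) := by
  obtain ⟨m, rfl⟩ : ∃ m, n = m + 1 := ⟨n - 1, by omega⟩
  have hdiff : ∀ k, (x - x') (k + 1) = A k *ᵥ (x - x') k + (u - u') k • b k := by
    intro k
    simp only [Pi.sub_apply, hsol, hsol', mulVec_sub, sub_smul]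
    abel
  obtain ⟨hx, hu⟩ := eq_zero_of_cvec_dotProduct_eq_zero A b hM (x - x') (u - u') hdiff
    (fun k => by rw [Pi.sub_apply, dotProduct_sub, hy, sub_self])
  exact ⟨fun k => sub_eq_zero.mp (hx k), fun k => sub_eq_zero.mp (hu k)⟩
end
end

section
/- Let n ≥ 1 and suppose M_k is invertible for every k ∈ ℤ. Set c_k^T := e_n^T M_k^{-1}, let Θ_k be the (invertible) matrix whose i-th row is c_{k+i}^T A_{k+i-1} ⋯ A_k, let Ā_k := Θ_{k+1} A_k Θ_k^{-1}, and a_{i,k} := −(Ā_k)_{n-1,i}. Then for every sequence y : ℤ → ℝ, the sequences defined by x_k := Θ_k^{-1} (y_k, …, y_{k+n-1})^T and u_k := y_{k+n} + Σ_{i=0}^{n-1} a_{i,k} y_{k+i} form a solution of the system, and this solution realizes the prescribed output: c_k^T x_k = y_k for all k ∈ ℤ. -/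
open Matrix BigOperators

noncomputable section

namespace Aux

variable {n : ℕ} (A : ℤ → Matrix (Fin n) (Fin n) ℝ) (b : ℤ → Fin n → ℝ)

lemma pmat_congr {k k' : ℤ} (h : k = k') (j : ℕ) : Pmat n A k j = Pmat n A k' j := by rw [h]

lemma cvec_congr {k k' : ℤ} (h : k = k') : cvec n A b k = cvec n A b k' := by rw [h]

lemma pmat_mul (k : ℤ) (i j : ℕ) :
    Pmat n A (k + i) i * Pmat n A k j = Pmat n A (k + i) (i + j) := by
  induction j with
  | zero => simp [Pmat]
  | succ j ih =>
    have h1 : Pmat n A k (j+1) = Pmat n A k j * A (k - ((j:ℤ)+1)) := rfl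
    have h2 : Pmat n A (k+(i:ℤ)) (i+(j+1)) =
        Pmat n A (k+(i:ℤ)) (i+j) * A ((k+(i:ℤ)) - (((i+j:ℕ):ℤ)+1)) := rfl
    rw [h1, ← mul_assoc, ih, h2]
    congr 2
    push_cast
    ring

lemma cvec_pmat_b (hM : ∀ k : ℤ, IsUnit (Mmat n A b k)) (k : ℤ) (j : ℕ) (hj : j < n) :
    (cvec n A b k ᵥ* Pmat n A k j) ⬝ᵥ b (k - 1 - (j : ℤ)) = if j = n - 1 then 1 else 0 := by
  have hMk := (Matrix.isUnit_iff_isUnit_det _).1 (hM k)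
  have h1 : cvec n A b k ᵥ* Mmat n A b k = elast n := by
    rw [cvec, vecMul_vecMul, Matrix.nonsing_inv_mul _ hMk, vecMul_one]
  have h2 := congrFun h1 ⟨j, hj⟩
  rw [Matrix.vecMul] at h2
  simp only [Mmat, Matrix.of_apply, elast] at h2
  rw [show ∀ v : Fin n → ℝ, (v ⬝ᵥ fun i => (Pmat n A k j *ᵥ b (k - 1 - (j:ℤ))) i) =
      (v ᵥ* Pmat n A k j) ⬝ᵥ b (k - 1 - (j:ℤ)) from fun v => (Matrix.dotProduct_mulVec v _ _)] at h2
  exact h2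

lemma theta_row (k : ℤ) (i : Fin n) :
    Theta n A b k i = cvec n A b (k + (i:ℕ)) ᵥ* Pmat n A (k + (i:ℕ)) (i:ℕ) := rfl

lemma theta_mul_M (hM : ∀ k : ℤ, IsUnit (Mmat n A b k)) (k : ℤ) (i j : Fin n)
    (h : (i:ℕ) + (j:ℕ) < n) :
    (Theta n A b k * Mmat n A b k) i j = if (i:ℕ) + (j:ℕ) = n - 1 then 1 else 0 := by
  have key := cvec_pmat_b A b hM (k + (i:ℕ)) ((i:ℕ) + (j:ℕ)) h
  have e0 : (Theta n A b k * Mmat n A b k) i j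
      = (cvec n A b (k+(i:ℕ)) ᵥ* Pmat n A (k+(i:ℕ)) (i:ℕ)) ⬝ᵥ
        (Pmat n A k (j:ℕ) *ᵥ b (k - 1 - ((j:ℕ):ℤ))) := rfl
  rw [e0, Matrix.dotProduct_mulVec, Matrix.vecMul_vecMul, pmat_mul]
  have harg : k - 1 - ((j:ℕ):ℤ) = (k + (i:ℕ)) - 1 - (((i:ℕ)+(j:ℕ) : ℕ) : ℤ) := by
    push_cast; ring
  rw [harg]
  exact key

lemma theta_isUnit (hM : ∀ k : ℤ, IsUnit (Mmat n A b k)) (k : ℤ) :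
    IsUnit (Theta n A b k) := by
  have hMk := (Matrix.isUnit_iff_isUnit_det _).1 (hM k)
  set T := Theta n A b k * Mmat n A b k with hT
  have hS : (T.submatrix id Fin.revPerm).det = ∏ i : Fin n, T i (Fin.revPerm i) := by
    apply Matrix.det_of_lowerTriangular
    intro i j hij
    have hij' : (i : ℕ) < (j : ℕ) := hij
    have hj := j.isLt
    have hval : ((Fin.revPerm j : Fin n) : ℕ) = n - ((j:ℕ)+1) := by
      simp [Fin.revPerm_apply, Fin.val_rev]
    have h1 : (i:ℕ) + ((Fin.revPerm j : Fin n) : ℕ) < n := by omega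
    have h2 : (i:ℕ) + ((Fin.revPerm j : Fin n) : ℕ) ≠ n - 1 := by omega
    simp only [Matrix.submatrix_apply, id_eq]
    rw [hT, theta_mul_M A b hM k i _ h1, if_neg h2]
  have hprod : (∏ i : Fin n, T i (Fin.revPerm i)) = 1 := by
    apply Finset.prod_eq_one
    intro i _
    have hi := i.isLt
    have hval : ((Fin.revPerm i : Fin n) : ℕ) = n - ((i:ℕ)+1) := by
      simp [Fin.revPerm_apply, Fin.val_rev]
    have h1 : (i:ℕ) + ((Fin.revPerm i : Fin n) : ℕ) < n := by omega
    have h2 : (i:ℕ) + ((Fin.revPerm i : Fin n) : ℕ) = n - 1 := by omega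
    rw [hT, theta_mul_M A b hM k i _ h1, if_pos h2]
  have hdetS := hS.trans hprod
  rw [Matrix.det_permute'] at hdetS
  have hdetT : T.det ≠ 0 := by
    intro h0
    rw [h0, mul_zero] at hdetS
    exact zero_ne_one hdetS
  rw [hT, Matrix.det_mul] at hdetT
  have : (Theta n A b k).det ≠ 0 := fun h0 => hdetT (by rw [h0, zero_mul])
  exact (Matrix.isUnit_iff_isUnit_det _).2 (isUnit_iff_ne_zero.2 this)

lemma theta_mulVec_x (hM : ∀ k : ℤ, IsUnit (Mmat n A b k)) (k : ℤ) (v : Fin n → ℝ) :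
    Theta n A b k *ᵥ ((Theta n A b k)⁻¹ *ᵥ v) = v := by
  have h := (Matrix.isUnit_iff_isUnit_det _).1 (theta_isUnit A b hM k)
  rw [Matrix.mulVec_mulVec, Matrix.mul_nonsing_inv _ h, Matrix.one_mulVec]

lemma abar_mul_theta (hM : ∀ k : ℤ, IsUnit (Mmat n A b k)) (k : ℤ) :
    Abar n A b k * Theta n A b k = Theta n A b (k+1) * A k := by
  have h := (Matrix.isUnit_iff_isUnit_det _).1 (theta_isUnit A b hM k)
  rw [Abar, mul_assoc, Matrix.nonsing_inv_mul _ h, mul_one]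

lemma theta_succ_row (k : ℤ) (i : Fin n) (h : (i:ℕ) + 1 < n) :
    (Theta n A b (k+1) * A k) i = Theta n A b k ⟨(i:ℕ)+1, h⟩ := by
  have e0 : (Theta n A b (k+1) * A k) i
      = (cvec n A b ((k+1)+(i:ℕ)) ᵥ* Pmat n A ((k+1)+(i:ℕ)) (i:ℕ)) ᵥ* A k := rfl
  rw [e0, Matrix.vecMul_vecMul]
  have hP : Pmat n A ((k+1)+(i:ℕ)) (i:ℕ) * A k = Pmat n A ((k+1)+(i:ℕ)) ((i:ℕ)+1) := by
    have h2 : Pmat n A ((k+1)+(i:ℕ)) ((i:ℕ)+1)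
        = Pmat n A ((k+1)+(i:ℕ)) (i:ℕ) * A (((k+1)+(i:ℕ)) - (((i:ℕ):ℤ)+1)) := rfl
    rw [h2]
    congr 2
    ring
  rw [hP, theta_row]
  have harg : k + (((⟨(i:ℕ)+1, h⟩ : Fin n) : ℕ) : ℤ) = (k+1)+(i:ℕ) := by push_cast; ring
  rw [harg]

lemma theta_mulVec_b (hM : ∀ k : ℤ, IsUnit (Mmat n A b k)) (k : ℤ) :
    Theta n A b (k+1) *ᵥ b k = elast n := by
  funext i
  have key := cvec_pmat_b A b hM ((k+1)+(i:ℕ)) (i:ℕ) i.isLt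
  have e0 : (Theta n A b (k+1) *ᵥ b k) i
      = (cvec n A b ((k+1)+(i:ℕ)) ᵥ* Pmat n A ((k+1)+(i:ℕ)) (i:ℕ)) ⬝ᵥ b k := rfl
  have harg : ((k+1)+(i:ℕ)) - 1 - ((i:ℕ):ℤ) = k := by ring
  rw [harg] at key
  rw [e0, key]
  rfl

end Aux

/-- for every sequence `y : ℤ → ℝ`, the sequences
`x_k := Θ_k⁻¹ (y_k, …, y_{k+n-1})^T` and `u_k := y_{k+n} + Σ_{i=0}^{n-1} a_{i,k} y_{k+i}`
(with `a_{i,k} := -(Ā_k)_{n-1,i}`) form a solution of the system, and this solution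
realizes the prescribed output: `c_k^T x_k = y_k` for all `k`. -/
theorem stmt9 (n : ℕ) (hn : 1 ≤ n)
    (A : ℤ → Matrix (Fin n) (Fin n) ℝ) (b : ℤ → Fin n → ℝ)
    (hM : ∀ k : ℤ, IsUnit (Mmat n A b k))
    (y : ℤ → ℝ)
    (x : ℤ → Fin n → ℝ) (u : ℤ → ℝ)
    (hx : ∀ k : ℤ, x k = (Theta n A b k)⁻¹ *ᵥ fun i : Fin n => y (k + (i : ℕ)))
    (hu : ∀ k : ℤ, u k = y (k + n) +
        ∑ i : Fin n, (-(Abar n A b k (⟨n - 1, by omega⟩ : Fin n) i)) * y (k + (i : ℕ))) :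
    (∀ k : ℤ, x (k + 1) = A k *ᵥ x k + u k • b k) ∧
    (∀ k : ℤ, cvec n A b k ⬝ᵥ x k = y k) := by
  have hz : ∀ k : ℤ, Theta n A b k *ᵥ x k = fun i : Fin n => y (k + (i:ℕ)) := by
    intro k
    rw [hx k, Aux.theta_mulVec_x A b hM]
  constructor
  · intro k
    -- cancel Θ_{k+1}
    have hdet1 := (Matrix.isUnit_iff_isUnit_det _).1 (Aux.theta_isUnit A b hM (k+1))
    have hmain : Theta n A b (k+1) *ᵥ x (k+1)
        = Theta n A b (k+1) *ᵥ (A k *ᵥ x k + u k • b k) := by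
      rw [Matrix.mulVec_add, Matrix.mulVec_smul, Aux.theta_mulVec_b A b hM,
          Matrix.mulVec_mulVec, ← Aux.abar_mul_theta A b hM, ← Matrix.mulVec_mulVec, hz, hz]
      funext i
      by_cases hi : (i:ℕ) + 1 < n
      · -- shift rows
        have hrow : (Abar n A b k *ᵥ fun j : Fin n => y (k + (j:ℕ))) i
            = y (k + ((i:ℕ)+1)) := by
          have e1 : (Abar n A b k *ᵥ fun j : Fin n => y (k + (j:ℕ))) i
              = ((Abar n A b k * Theta n A b k) *ᵥ x k) i := by
            rw [← Matrix.mulVec_mulVec, hz]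
          rw [e1, Aux.abar_mul_theta A b hM]
          have e2 : ((Theta n A b (k+1) * A k) *ᵥ x k) i
              = (Theta n A b (k+1) * A k) i ⬝ᵥ x k := rfl
          rw [e2, Aux.theta_succ_row A b k i hi]
          have e3 : Theta n A b k ⟨(i:ℕ)+1, hi⟩ ⬝ᵥ x k
              = (Theta n A b k *ᵥ x k) ⟨(i:ℕ)+1, hi⟩ := rfl
          rw [e3, hz]
          have harg : k + ((((i:ℕ)+1 : ℕ)) : ℤ) = k + (((i:ℕ):ℤ)+1) := by push_cast; ring
          show y (k + ((((i:ℕ)+1 : ℕ)) : ℤ)) = y (k + (((i:ℕ):ℤ)+1))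
          rw [harg]
        have helast : elast n i = 0 := by
          simp only [elast]
          rw [if_neg (by omega)]
        simp only [Pi.add_apply, Pi.smul_apply, smul_eq_mul]
        rw [hrow, helast, mul_zero, add_zero]
        have harg2 : (k+1) + (((i:ℕ)):ℤ) = k + (((i:ℕ):ℤ)+1) := by ring
        show y ((k+1) + (((i:ℕ)):ℤ)) = y (k + (((i:ℕ):ℤ)+1))
        rw [harg2]
      · -- last row
        have hi' : (i:ℕ) = n - 1 := by have := i.isLt; omega
        have helast : elast n i = 1 := by simp only [elast]; rw [if_pos hi']
        simp only [Pi.add_apply, Pi.smul_apply, smul_eq_mul]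
        rw [helast, mul_one, hu k]
        have hrow : (Abar n A b k *ᵥ fun j : Fin n => y (k + ((j:ℕ):ℤ))) i
            = ∑ j : Fin n, Abar n A b k i j * y (k + ((j:ℕ):ℤ)) := rfl
        rw [hrow]
        have hAeq : ∀ j : Fin n, Abar n A b k (⟨n - 1, by omega⟩ : Fin n) j
            = Abar n A b k i j := by
          intro j
          congr 1
          exact Fin.ext (by simpa using hi'.symm)
        simp only [hAeq]
        have hc : ∑ j : Fin n, Abar n A b k i j * y (k + ((j:ℕ):ℤ))
            + ∑ j : Fin n, -Abar n A b k i j * y (k + ((j:ℕ):ℤ)) = 0 := by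
          rw [← Finset.sum_add_distrib]
          exact Finset.sum_eq_zero fun j _ => by ring
        have hy : ((k+1) + (((i:ℕ)):ℤ)) = k + (n:ℤ) := by omega
        show y ((k+1) + (((i:ℕ)):ℤ)) = _
        rw [hy]
        linarith [hc]
    have hdet1' := hdet1
    have := congrArg (fun v => (Theta n A b (k+1))⁻¹ *ᵥ v) hmain
    simpa [Matrix.mulVec_mulVec, Matrix.nonsing_inv_mul _ hdet1, Matrix.one_mulVec] using this
  · intro k
    have e0 : Theta n A b k (⟨0, by omega⟩ : Fin n) = cvec n A b k := by
      rw [Aux.theta_row]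
      simp [Pmat, Matrix.vecMul_one]
    have e1 : cvec n A b k ⬝ᵥ x k = (Theta n A b k *ᵥ x k) (⟨0, by omega⟩ : Fin n) := by
      rw [← e0]; rfl
    rw [e1, hz]
    simp
end
end

section
/- (Time-invariant special case.) Let n ≥ 1, let A be an n×n real matrix and b ∈ ℝ^n, and suppose the controllability matrix M := [b, Ab, …, A^{n-1}b] is invertible. Then with c^T := e_n^T M^{-1}, the map which sends a solution (x, u) of x_{k+1} = A x_k + b u_k (k ∈ ℤ) to the sequence (c^T x_k)_{k ∈ ℤ} is a bijection from the set of all solutions onto the set of all real sequences ℤ → ℝ. -/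
open Matrix BigOperators

noncomputable section

/-- The controllability matrix `M := [b, Ab, …, A^{n-1} b]` of a linear time-invariant
single-input system, whose `j`-th column is `A^j b`. -/
def ctrbMat (n : ℕ) (A : Matrix (Fin n) (Fin n) ℝ) (b : Fin n → ℝ) :
    Matrix (Fin n) (Fin n) ℝ :=
  Matrix.of fun i j => ((A ^ (j : ℕ)) *ᵥ b) i

namespace Stmt11Aux

variable (n : ℕ) (A : Matrix (Fin n) (Fin n) ℝ) (b : Fin n → ℝ)

def cvec : Fin n → ℝ := elast n ᵥ* (ctrbMat n A b)⁻¹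

def Tmat : Matrix (Fin n) (Fin n) ℝ :=
  Matrix.of fun m i => (cvec n A b ᵥ* (A ^ (m : ℕ))) i

variable {n A b}

lemma keyN (hM : IsUnit (ctrbMat n A b)) {j : ℕ} (hj : j < n) :
    cvec n A b ⬝ᵥ ((A ^ j) *ᵥ b) = if j = n - 1 then 1 else 0 := by
  have h1 : cvec n A b ᵥ* ctrbMat n A b = elast n := by
    rw [cvec, Matrix.vecMul_vecMul,
      Matrix.nonsing_inv_mul _ ((Matrix.isUnit_iff_isUnit_det _).mp hM), Matrix.vecMul_one]
  have h2 : cvec n A b ⬝ᵥ ((A ^ j) *ᵥ b) = (cvec n A b ᵥ* ctrbMat n A b) ⟨j, hj⟩ := by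
    simp [Matrix.vecMul, ctrbMat, dotProduct]
  rw [h2, h1]; simp [elast]

lemma rowT (m : Fin n) (x : Fin n → ℝ) :
    (Tmat n A b *ᵥ x) m = (cvec n A b ᵥ* A ^ (m : ℕ)) ⬝ᵥ x := rfl

lemma isUnit_detT (hM : IsUnit (ctrbMat n A b)) : IsUnit (Tmat n A b).det := by
  have hN : ∀ i j : Fin n, (Tmat n A b * ctrbMat n A b) i j
      = cvec n A b ⬝ᵥ ((A ^ ((i : ℕ) + (j : ℕ))) *ᵥ b) := by
    intro i j
    rw [pow_add, ← Matrix.mulVec_mulVec, Matrix.dotProduct_mulVec]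
    simp [Matrix.mul_apply, Tmat, ctrbMat, dotProduct]
  set N := Tmat n A b * ctrbMat n A b with hNdef
  have hPdet : (Matrix.of fun i j => N (Fin.revPerm i) j).det = 1 := by
    have htri : (Matrix.of fun i j => N (Fin.revPerm i) j).BlockTriangular id := by
      intro i j hij
      simp only [Matrix.of_apply]
      have hi : ((Fin.revPerm i : Fin n) : ℕ) = n - ((i : ℕ) + 1) := Fin.val_rev i
      have hjlt : (j : ℕ) < (i : ℕ) := hij
      have hlt : ((Fin.revPerm i : Fin n) : ℕ) + (j : ℕ) < n := by
        have := i.isLt; omega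
      rw [hN, keyN hM hlt]
      have hne : ¬ (((Fin.revPerm i : Fin n) : ℕ) + (j : ℕ) = n - 1) := by
        have := i.isLt; omega
      rw [if_neg hne]
    rw [Matrix.det_of_upperTriangular htri]
    apply Finset.prod_eq_one
    intro i _
    simp only [Matrix.of_apply]
    have hi : ((Fin.revPerm i : Fin n) : ℕ) = n - ((i : ℕ) + 1) := Fin.val_rev i
    have hlt : ((Fin.revPerm i : Fin n) : ℕ) + (i : ℕ) < n := by
      have := i.isLt; omega
    rw [hN, keyN hM hlt]
    have heq : ((Fin.revPerm i : Fin n) : ℕ) + (i : ℕ) = n - 1 := by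
      have := i.isLt; omega
    rw [if_pos heq]
  have hdetN : N.det ≠ 0 := by
    intro h0
    have hthis := Matrix.det_permute (Fin.revPerm : Equiv.Perm (Fin n)) N
    have hsub : N.submatrix (⇑(Fin.revPerm : Equiv.Perm (Fin n))) id
        = (Matrix.of fun i j => N (Fin.revPerm i) j) := rfl
    rw [hsub, hPdet, h0, mul_zero] at hthis
    exact one_ne_zero hthis
  have : N.det = (Tmat n A b).det * (ctrbMat n A b).det := Matrix.det_mul _ _
  rw [this] at hdetN
  exact isUnit_iff_ne_zero.mpr (left_ne_zero_of_mul hdetN)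

lemma sol_dot (hM : IsUnit (ctrbMat n A b)) (x : ℤ → Fin n → ℝ) (u : ℤ → ℝ)
    (hsol : ∀ k : ℤ, x (k + 1) = A *ᵥ x k + u k • b) :
    ∀ m : ℕ, m < n → ∀ k : ℤ, (cvec n A b ᵥ* A ^ m) ⬝ᵥ x k = cvec n A b ⬝ᵥ x (k + m) := by
  intro m
  induction m with
  | zero => intro _ k; simp
  | succ m ih =>
    intro hm k
    have hmn : m < n := by omega
    have h1 : (cvec n A b ᵥ* A ^ (m + 1)) ⬝ᵥ x k
        = (cvec n A b ᵥ* A ^ m) ⬝ᵥ (A *ᵥ x k) := by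
      rw [pow_succ, ← Matrix.vecMul_vecMul, ← Matrix.dotProduct_mulVec]
    have h2 : A *ᵥ x k = x (k + 1) - u k • b := by
      rw [hsol k]; ring
    rw [h1, h2, dotProduct_sub, ih hmn (k + 1), dotProduct_smul]
    have h3 : (cvec n A b ᵥ* A ^ m) ⬝ᵥ b = cvec n A b ⬝ᵥ ((A ^ m) *ᵥ b) :=
      (Matrix.dotProduct_mulVec _ _ _).symm
    have h4 : ¬ (m = n - 1) := by omega
    rw [h3, keyN hM hmn]
    simp [h4]
    congr 1
    ring

end Stmt11Aux

/-- time-invariant special case: if the controllability matrix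
`M = [b, Ab, …, A^{n-1} b]` is invertible, then with `c^T := e_n^T M^{-1}` the map sending
a solution `(x, u)` of `x_{k+1} = A x_k + b u_k` (`k ∈ ℤ`) to the sequence
`(c^T x_k)_{k ∈ ℤ}` is a bijection from the set of all solutions onto the set of all real
sequences `ℤ → ℝ`. -/
theorem stmt11 (n : ℕ) (hn : 1 ≤ n)
    (A : Matrix (Fin n) (Fin n) ℝ) (b : Fin n → ℝ)
    (hM : IsUnit (ctrbMat n A b)) :
    Function.Bijective
      (fun s : {p : (ℤ → Fin n → ℝ) × (ℤ → ℝ) //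
            ∀ k : ℤ, p.1 (k + 1) = A *ᵥ p.1 k + p.2 k • b} =>
        fun k : ℤ => (elast n ᵥ* (ctrbMat n A b)⁻¹) ⬝ᵥ s.val.1 k) := by
  classical
  set c := Stmt11Aux.cvec n A b with hc
  set T := Stmt11Aux.Tmat n A b with hT
  have hdetT := Stmt11Aux.isUnit_detT hM
  have hTcancel : ∀ v w : Fin n → ℝ, T *ᵥ v = T *ᵥ w → v = w := by
    intro v w h
    have h1 : T⁻¹ *ᵥ (T *ᵥ v) = T⁻¹ *ᵥ (T *ᵥ w) := by rw [h]
    rwa [Matrix.mulVec_mulVec, Matrix.mulVec_mulVec, Matrix.nonsing_inv_mul _ hdetT,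
      Matrix.one_mulVec, Matrix.one_mulVec] at h1
  constructor
  · -- injective
    intro s t h
    have hy : ∀ k : ℤ, c ⬝ᵥ s.val.1 k = c ⬝ᵥ t.val.1 k := fun k => congrFun h k
    have hx : ∀ k : ℤ, s.val.1 k = t.val.1 k := by
      intro k
      apply hTcancel
      funext m
      rw [Stmt11Aux.rowT, Stmt11Aux.rowT,
        Stmt11Aux.sol_dot hM _ _ s.prop (m : ℕ) m.isLt k,
        Stmt11Aux.sol_dot hM _ _ t.prop (m : ℕ) m.isLt k]
      exact hy _
    have hu : ∀ k : ℤ, s.val.2 k = t.val.2 k := by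
      intro k
      have key : ∀ (p : {p : (ℤ → Fin n → ℝ) × (ℤ → ℝ) //
            ∀ k : ℤ, p.1 (k + 1) = A *ᵥ p.1 k + p.2 k • b}) (k : ℤ),
          p.val.2 k = (c ᵥ* A ^ (n - 1)) ⬝ᵥ (p.val.1 (k + 1) - A *ᵥ p.val.1 k) := by
        intro p k
        have h2 : p.val.1 (k + 1) - A *ᵥ p.val.1 k = p.val.2 k • b := by
          rw [p.prop k]; ring
        have hb : (c ᵥ* A ^ (n - 1)) ⬝ᵥ b = (1 : ℝ) := by
          rw [← Matrix.dotProduct_mulVec]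
          have := Stmt11Aux.keyN (A := A) (b := b) hM (by omega : n - 1 < n)
          simpa using this
        rw [h2, dotProduct_smul, hb]
        simp
      rw [key s, key t, hx, hx]
    apply Subtype.ext
    apply Prod.ext
    · funext k; exact hx k
    · funext k; exact hu k
  · -- surjective
    intro y
    set x : ℤ → Fin n → ℝ := fun k => T⁻¹ *ᵥ (fun m : Fin n => y (k + (m : ℕ))) with hx
    have hTx : ∀ k : ℤ, T *ᵥ x k = fun m : Fin n => y (k + (m : ℕ)) := by
      intro k
      rw [hx, Matrix.mulVec_mulVec, Matrix.mul_nonsing_inv _ hdetT, Matrix.one_mulVec]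
    set u : ℤ → ℝ := fun k => y (k + (n : ℕ)) - (c ᵥ* A ^ n) ⬝ᵥ x k with hu
    have hsol : ∀ k : ℤ, x (k + 1) = A *ᵥ x k + u k • b := by
      intro k
      apply hTcancel
      funext m
      rw [Stmt11Aux.rowT, Stmt11Aux.rowT]
      have hL : (c ᵥ* A ^ (m : ℕ)) ⬝ᵥ x (k + 1) = y (k + 1 + (m : ℕ)) := by
        have := congrFun (hTx (k + 1)) m
        rw [Stmt11Aux.rowT] at this
        exact this
      rw [hL]
      have hsplit : (c ᵥ* A ^ (m : ℕ)) ⬝ᵥ (A *ᵥ x k + u k • b)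
          = (c ᵥ* A ^ ((m : ℕ) + 1)) ⬝ᵥ x k + u k * ((c ᵥ* A ^ (m : ℕ)) ⬝ᵥ b) := by
        rw [dotProduct_add, dotProduct_smul, smul_eq_mul]
        congr 1
        rw [Matrix.dotProduct_mulVec, pow_succ, ← Matrix.vecMul_vecMul]
      have hb : (c ᵥ* A ^ (m : ℕ)) ⬝ᵥ b = if (m : ℕ) = n - 1 then (1:ℝ) else 0 := by
        rw [← Matrix.dotProduct_mulVec]
        exact Stmt11Aux.keyN hM m.isLt
      rw [hsplit, hb]
      by_cases hm : (m : ℕ) = n - 1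
      · have hm1 : (m : ℕ) + 1 = n := by omega
        rw [if_pos hm, hm1]
        simp only [hu]
        have harg : k + 1 + ((m : ℕ) : ℤ) = k + (n : ℕ) := by omega
        rw [harg]; ring
      · have hm1 : (m : ℕ) + 1 < n := by have := m.isLt; omega
        rw [if_neg hm, mul_zero, add_zero]
        have h5 : (c ᵥ* A ^ ((m : ℕ) + 1)) ⬝ᵥ x k = y (k + (((m : ℕ) + 1 : ℕ) : ℤ)) := by
          have h6 := congrFun (hTx k) ⟨(m : ℕ) + 1, hm1⟩
          rw [Stmt11Aux.rowT] at h6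
          exact h6
        rw [h5]
        congr 1
        push_cast
        ring
    refine ⟨⟨⟨x, u⟩, hsol⟩, ?_⟩
    funext k
    show c ⬝ᵥ x k = y k
    have := congrFun (hTx k) ⟨0, hn⟩
    rw [Stmt11Aux.rowT] at this
    simpa using this
end
end
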